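/- Let G be a CADMG and let G' be a CADMG with random vertex set V' that is reachable from G. Then the intrinsic sets of G' are precisely the intrinsic sets of G that are contained in V', and each such intrinsic set has the same recursive head and the same tail in G' as in G. -/

import Mathlib

open Classical

noncomputable section

/-- A conditional acyclic directed mixed graph (CADMG): disjoint sets of random
vertices `V` and fixed vertices `W`, directed edges into `V` with no loops or
directed cycles, symmetric bidirected edges between distinct random vertices,
and every fixed vertex has at least one child. -/
structure CADMG (α : Type) where
  V : Set α
  W : Set α
  dir : Set (α × α)
  bi : Set (α × α)
  disjointVW : Disjoint V W
  dir_mem : ∀ e ∈ dir, e.1 ∈ V ∪ W ∧ e.2 ∈ V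
  dir_irrefl : ∀ e ∈ dir, e.1 ≠ e.2
  acyclic : ∀ a b : α, Relation.ReflTransGen (fun x y => (x, y) ∈ dir) a b →
      Relation.ReflTransGen (fun x y => (x, y) ∈ dir) b a → a = b
  bi_symm : ∀ a b : α, (a, b) ∈ bi → (b, a) ∈ bi
  bi_mem : ∀ e ∈ bi, e.1 ∈ V ∧ e.2 ∈ V
  bi_irrefl : ∀ e ∈ bi, e.1 ≠ e.2
  fixed_child : ∀ w ∈ W, ∃ v, (w, v) ∈ dir

namespace CADMG

variable {α : Type}

/-- The parents of a vertex. -/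
def pa (G : CADMG α) (b : α) : Set α := {a | (a, b) ∈ G.dir}

/-- The parents of a set of vertices. -/
def paSet (G : CADMG α) (A : Set α) : Set α := {a | ∃ b ∈ A, (a, b) ∈ G.dir}

/-- The ancestors of a set of vertices (every vertex is its own ancestor). -/
def anc (G : CADMG α) (A : Set α) : Set α :=
  {w | ∃ v ∈ A, Relation.ReflTransGen (fun x y => (x, y) ∈ G.dir) w v}

/-- An ancestral set contains all of its own ancestors. -/
def Ancestral (G : CADMG α) (A : Set α) : Prop := G.anc A = A

/-- A random-ancestral set: a set of random vertices all of whose ancestors are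
in the set itself or fixed. -/
def RandomAncestral (G : CADMG α) (A : Set α) : Prop :=
  A ⊆ G.V ∧ G.anc A ⊆ A ∪ G.W

/-- The sterile subset of `C`: those members of `C` that are not parents of `C`. -/
def sterile (G : CADMG α) (C : Set α) : Set α := C \ G.paSet C

/-- A bidirected-connected set of random vertices: every two members are joined by
a path of bidirected edges with all intermediate vertices inside the set. -/
def BiConn (G : CADMG α) (B : Set α) : Prop :=
  B ⊆ G.V ∧ ∀ a ∈ B, ∀ b ∈ B,
    Relation.ReflTransGen (fun x y => (x, y) ∈ G.bi ∧ x ∈ B ∧ y ∈ B) a b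

/-- A district: a maximal bidirected-connected set of random vertices. -/
def IsDistrict (G : CADMG α) (D : Set α) : Prop :=
  D.Nonempty ∧ G.BiConn D ∧ ∀ D', G.BiConn D' → D ⊆ D' → D' = D

/-- `dis G B`: the union of the districts of `G` meeting `B`. -/
def dis (G : CADMG α) (B : Set α) : Set α :=
  ⋃₀ {D | G.IsDistrict D ∧ (D ∩ B).Nonempty}

/-- The induced graph `G[C]`: random vertices `C`, fixed vertices `pa_G(C) \ C`,
the bidirected edges of `G` within `C` and the directed edges of `G` pointing
into `C`. -/
def induce (G : CADMG α) (C : Set α) : CADMG α where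
  V := C ∩ G.V
  W := G.paSet (C ∩ G.V) \ (C ∩ G.V)
  dir := {e | e ∈ G.dir ∧ e.2 ∈ C ∩ G.V}
  bi := {e | e ∈ G.bi ∧ e.1 ∈ C ∩ G.V ∧ e.2 ∈ C ∩ G.V}
  disjointVW := by
    rw [Set.disjoint_left]; rintro a ha ⟨-, h⟩; exact h ha
  dir_mem := by
    rintro e ⟨he, h2⟩
    refine ⟨?_, h2⟩
    by_cases h1 : e.1 ∈ C ∩ G.V
    · exact Or.inl h1
    · exact Or.inr ⟨⟨e.2, h2, he⟩, h1⟩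
  dir_irrefl := fun e he => G.dir_irrefl e he.1
  acyclic := fun a b h1 h2 =>
    G.acyclic a b
      (by
        clear h2
        induction h1 with
        | refl => exact Relation.ReflTransGen.refl
        | tail _ h ih => exact ih.tail h.1)
      (by
        clear h1
        induction h2 with
        | refl => exact Relation.ReflTransGen.refl
        | tail _ h ih => exact ih.tail h.1)
  bi_symm := fun a b h => ⟨G.bi_symm a b h.1, h.2.2, h.2.1⟩
  bi_mem := fun e he => ⟨he.2.1, he.2.2⟩
  bi_irrefl := fun e he => G.bi_irrefl e he.1
  fixed_child := by
    rintro w ⟨⟨b, hb, hwb⟩, -⟩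
    exact ⟨b, hwb, hb⟩

/-- A CADMG `G'` is reachable from `G` if it is obtained by iteratively
restricting to a district (`𝔡`) or to a random-ancestral set (`𝔪`). -/
inductive Reach : CADMG α → CADMG α → Prop where
  | refl (G : CADMG α) : Reach G G
  | district {G₁ G₂ : CADMG α} {D : Set α} :
      Reach G₁ G₂ → G₂.IsDistrict D → Reach G₁ (G₂.induce D)
  | margin {G₁ G₂ : CADMG α} {A : Set α} :
      Reach G₁ G₂ → G₂.RandomAncestral A → Reach G₁ (G₂.induce A)

/-- `G₁` is a subgraph of `G₂`. -/
def Subgraph (G₁ G₂ : CADMG α) : Prop :=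
  G₁.V ⊆ G₂.V ∧ G₁.W ⊆ G₂.W ∧ G₁.dir ⊆ G₂.dir ∧ G₁.bi ⊆ G₂.bi

/-- An intrinsic set: a nonempty bidirected-connected set `S` of random vertices
such that `G[S]` is reachable from `G`. -/
def Intrinsic (G : CADMG α) (S : Set α) : Prop :=
  S.Nonempty ∧ G.BiConn S ∧ Reach G (G.induce S)

/-- The recursive heads of `G`: sterile subsets of intrinsic sets. -/
def heads (G : CADMG α) : Set (Set α) :=
  {H | ∃ S, G.Intrinsic S ∧ G.sterile S = H}

/-- The (unique) intrinsic set whose recursive head is `H`. -/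
def intrinsicOf (G : CADMG α) (H : Set α) : Set α :=
  ⋃₀ {S | G.Intrinsic S ∧ G.sterile S = H}

/-- The partial order on recursive heads: `H₁ ≺ H₂` iff the intrinsic set of
`H₁` is strictly contained in that of `H₂`. -/
def headLT (G : CADMG α) (H₁ H₂ : Set α) : Prop :=
  G.intrinsicOf H₁ ⊂ G.intrinsicOf H₂

/-- The tail of a recursive head: the parents of its intrinsic set. -/
def tail (G : CADMG α) (H : Set α) : Set α := G.paSet (G.intrinsicOf H)

/-- One step of the intrinsic-closure iteration: restrict to the ancestors of
`B`, then to the districts meeting `B`. -/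
def closureStep (B : Set α) (G : CADMG α) : CADMG α :=
  (G.induce (G.anc B)).induce ((G.induce (G.anc B)).dis B)

/-- The intrinsic closure `I_G(B)`: the random vertex set of the stable graph
obtained by repeatedly alternating restriction to the ancestors of `B` and to
the districts meeting `B`.  (After `Fintype.card α` rounds the iteration has
stabilised.) -/
def intrinsicClosure [Fintype α] (G : CADMG α) (B : Set α) : Set α :=
  ((closureStep B)^[Fintype.card α] G).V

/-- `Φ_G(C)`: the `≺`-maximal recursive heads of `G` contained in `C`. -/
def Phi (G : CADMG α) (C : Set α) : Set (Set α) :=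
  {H | H ∈ G.heads ∧ H ⊆ C ∧ ∀ H' ∈ G.heads, H' ⊆ C → H' ≠ H → ¬ G.headLT H H'}

/-- `ψ_G(C) = C \ ⋃ Φ_G(C)`. -/
def psi (G : CADMG α) (C : Set α) : Set α := C \ ⋃₀ G.Phi C

/-- The recursive-head partition `⟨C⟩_G`, defined by `⟨∅⟩ = ∅` and
`⟨C⟩ = Φ(C) ∪ ⟨ψ(C)⟩`.  (The guard on cardinalities is automatically satisfied
whenever the recursion is used, since `ψ_G(C) ⊊ C` for nonempty `C`.) -/
def partn (G : CADMG α) (C : Set α) : Set (Set α) :=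
  if C = ∅ then ∅
  else if h : (G.psi C).ncard < C.ncard then G.Phi C ∪ G.partn (G.psi C)
  else G.Phi C
termination_by C.ncard
decreasing_by exact h

/-- A kernel `p_{V|W}`, written as a function of a full assignment of binary
values to all vertices: it takes values in `[0,1]`, depends only on the
coordinates in `V ∪ W`, and for every assignment to `W` (and the remaining
coordinates) the values summed over assignments to `V` equal `1`. -/
def IsKernel [Fintype α] (V W : Set α) (p : (α → Bool) → ℝ) : Prop :=
  (∀ x, 0 ≤ p x ∧ p x ≤ 1) ∧
  (∀ x y : α → Bool, (∀ v ∈ V ∪ W, x v = y v) → p x = p y) ∧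
  (∀ x : α → Bool, ∑ g : α → Bool,
      (if ∀ v, v ∉ V → g v = x v then p g else 0) = 1)

/-- Sum a function of assignments over all values of the coordinates in `D`
(the marginal summing out the variables in `D`). -/
def marginOut [Fintype α] (D : Set α) (p : (α → Bool) → ℝ) (x : α → Bool) : ℝ :=
  ∑ g : α → Bool, if ∀ v, v ∉ D → g v = x v then p g else 0

/-- `q` is a version of the conditional kernel of `A` given `B` and `W`, derived
from the kernel `p = p_{V|W}`. -/
def IsCondVersion [Fintype α] (V W A B : Set α)
    (p q : (α → Bool) → ℝ) : Prop :=
  IsKernel A (B ∪ W) q ∧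
  ∀ x : α → Bool, q x * marginOut (V \ B) p x = marginOut (V \ (A ∪ B)) p x

/-- Recursive factorization of a kernel `p` according to a CADMG `G`
(the nested Markov property): either `|V| = 1`, or (i) `p` factorizes into
kernels indexed by the districts of `G`, each of which (when there are at least
two districts) recursively factorizes according to the induced graph, and
(ii) for every ancestral set `A` with `V \ A ≠ ∅` the margin over `A` does not
depend on the fixed coordinates outside `A` and recursively factorizes
according to `G[V ∩ A]`. -/
inductive RF [Fintype α] : CADMG α → ((α → Bool) → ℝ) → Prop where
  | base (G : CADMG α) (p : (α → Bool) → ℝ) (h : G.V.ncard = 1) : RF G p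
  | factor (G : CADMG α) (p : (α → Bool) → ℝ)
      (Ds : Finset (Set α)) (r : Set α → (α → Bool) → ℝ)
      (hDs : ∀ D, G.IsDistrict D ↔ D ∈ Ds)
      (hker : ∀ D ∈ Ds, IsKernel D (G.paSet D \ D) (r D))
      (hfact : ∀ x, p x = ∏ D ∈ Ds, r D x)
      (hrec : 2 ≤ Ds.card → ∀ D ∈ Ds, RF (G.induce D) (r D))
      (hmarg_nodep : ∀ A : Set α, G.Ancestral A → (G.V \ A).Nonempty →
        ∀ x y : α → Bool, (∀ v ∈ (G.V ∩ A) ∪ (G.W ∩ A), x v = y v) →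
          marginOut (G.V \ A) p x = marginOut (G.V \ A) p y)
      (hmarg_rf : ∀ A : Set α, G.Ancestral A → (G.V \ A).Nonempty →
        RF (G.induce (G.V ∩ A)) (marginOut (G.V \ A) p)) :
      RF G p

/-- The alternating sum `Σ_{O ⊆ C ⊆ U} (−1)^{|C\O|} ∏_{H ∈ ⟨C⟩_G} q_H(x_T)`. -/
def altSum (G : CADMG α) (q : Set α → (α → Bool) → ℝ) (x : α → Bool)
    (O U : Set α) : ℝ :=
  ∑ᶠ C ∈ {C : Set α | O ⊆ C ∧ C ⊆ U},
    (-1 : ℝ) ^ (C \ O).ncard * ∏ᶠ H ∈ G.partn C, q H x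

/-- A kernel `p` is parameterized according to `G`: there are parameters
`q_H(x_T)` (one real number for each recursive head `H` and each value `x_T` of
its tail `T`) with
`p(x_V | x_W) = Σ_{O ⊆ C ⊆ V} (−1)^{|C\O|} ∏_{H ∈ ⟨C⟩_G} q_H(x_T)`,
where `O = {v ∈ V : x_v = 0}`. -/
def Parameterized [Fintype α] (G : CADMG α) (p : (α → Bool) → ℝ) : Prop :=
  ∃ q : Set α → (α → Bool) → ℝ,
    (∀ H ∈ G.heads, ∀ x y : α → Bool,
        (∀ v ∈ G.tail H, x v = y v) → q H x = q H y) ∧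
    ∀ x : α → Bool,
      p x = G.altSum q x {v | v ∈ G.V ∧ x v = false} G.V

/-! Every graph reachable from `G` is an induced subgraph `G[U]`, and restrictions compose:
`G[A][B] = G[B ∩ A]`. A chain of restrictions from `G` down to `G[S]`, with `S`
bidirected-connected, can be replayed inside any `G[U]` with `S ⊆ U`: a random-ancestral set `A`
is replaced by `A ∩ U`, and a district by the district of the smaller graph containing `S`.
Taking `U = V'` makes `G'[S]` reachable from `G' = G[V']`. The converse, and the equality of
heads and tails, hold because `S` has the same parents and bidirected edges in `G[V']` as in `G`.
-/

attribute [ext] CADMG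

theorem W_eq_paSet_diff (G : CADMG α) : G.W = G.paSet G.V \ G.V := by
  ext w
  constructor
  · intro hw
    obtain ⟨v, hwv⟩ := G.fixed_child w hw
    exact ⟨⟨v, (G.dir_mem _ hwv).2, hwv⟩, Set.disjoint_right.mp G.disjointVW hw⟩
  · rintro ⟨⟨v, -, hwv⟩, hw⟩
    exact ((G.dir_mem _ hwv).1).resolve_left hw

theorem paSet_induce (G : CADMG α) {C S : Set α} (h : S ⊆ C) :
    (G.induce C).paSet S = G.paSet S := by
  ext a
  exact ⟨fun ⟨b, hb, hab, _⟩ => ⟨b, hb, hab⟩,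
    fun ⟨b, hb, hab⟩ => ⟨b, hb, hab, h hb, (G.dir_mem _ hab).2⟩⟩

theorem induce_self (G : CADMG α) : G.induce G.V = G := by
  refine CADMG.ext (Set.inter_self _) ?_ ?_ ?_
  · simp only [induce, Set.inter_self]
    exact G.W_eq_paSet_diff.symm
  · exact Set.ext fun e => ⟨fun he => he.1, fun he => ⟨he, by simpa using (G.dir_mem e he).2⟩⟩
  · exact Set.ext fun e => ⟨fun he => he.1, fun he => ⟨he, by simpa using G.bi_mem e he⟩⟩

theorem induce_induce (G : CADMG α) (A B : Set α) :
    (G.induce A).induce B = G.induce (B ∩ A) := by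
  have hV : B ∩ (A ∩ G.V) = B ∩ A ∩ G.V := (Set.inter_assoc _ _ _).symm
  refine CADMG.ext hV ?_ ?_ ?_
  · change (G.induce A).paSet (B ∩ (A ∩ G.V)) \ (B ∩ (A ∩ G.V)) = _
    rw [paSet_induce _ (Set.inter_subset_right.trans Set.inter_subset_left), hV]
    rfl
  · ext e
    simp only [induce, Set.mem_ofPred_eq, Set.mem_inter_iff]
    tauto
  · ext e
    simp only [induce, Set.mem_ofPred_eq, Set.mem_inter_iff]
    tauto

theorem induce_induce_of_subset (G : CADMG α) {A B : Set α} (h : B ⊆ A) :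
    (G.induce A).induce B = G.induce B := by
  rw [induce_induce, Set.inter_eq_left.mpr h]

theorem induce_inter_V (G : CADMG α) (C : Set α) : G.induce (C ∩ G.V) = G.induce C := by
  rw [← induce_induce, induce_self]

theorem biConn_induce_iff (G : CADMG α) {C S : Set α} (h : S ⊆ C) :
    (G.induce C).BiConn S ↔ G.BiConn S := by
  constructor
  · rintro ⟨hSV, hc⟩
    exact ⟨hSV.trans Set.inter_subset_right, fun a ha b hb =>
      Relation.ReflTransGen.mono (fun x y hxy => ⟨hxy.1.1, hxy.2⟩) _ _ (hc a ha b hb)⟩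
  · rintro ⟨hSV, hc⟩
    refine ⟨fun a ha => ⟨h ha, hSV ha⟩, fun a ha b hb => ?_⟩
    refine Relation.ReflTransGen.mono (fun x y ⟨hxy, hx, hy⟩ => ?_) _ _ (hc a ha b hb)
    exact ⟨⟨hxy, ⟨h hx, hSV hx⟩, ⟨h hy, hSV hy⟩⟩, hx, hy⟩

theorem BiConn.sUnion {G : CADMG α} {𝒟 : Set (Set α)} {x : α}
    (h : ∀ D ∈ 𝒟, G.BiConn D ∧ x ∈ D) : G.BiConn (⋃₀ 𝒟) := by
  refine ⟨Set.sUnion_subset fun D hD => (h D hD).1.1, ?_⟩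
  have widen : ∀ D ∈ 𝒟, ∀ u ∈ D, ∀ v ∈ D, Relation.ReflTransGen
      (fun y z => (y, z) ∈ G.bi ∧ y ∈ ⋃₀ 𝒟 ∧ z ∈ ⋃₀ 𝒟) u v := fun D hD u hu v hv =>
    Relation.ReflTransGen.mono (fun y z ⟨hyz, hy, hz⟩ => ⟨hyz, ⟨D, hD, hy⟩, ⟨D, hD, hz⟩⟩)
      _ _ ((h D hD).1.2 u hu v hv)
  rintro a ⟨Da, hDa, ha⟩ b ⟨Db, hDb, hb⟩
  exact (widen Da hDa a ha x (h Da hDa).2).trans (widen Db hDb x (h Db hDb).2 b hb)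

theorem BiConn.subset_of_isDistrict {G : CADMG α} {B D : Set α} (hB : G.BiConn B)
    (hD : G.IsDistrict D) (hBD : (B ∩ D).Nonempty) : B ⊆ D := by
  obtain ⟨x, hxB, hxD⟩ := hBD
  have hDB : G.BiConn (D ∪ B) := by
    rw [← Set.sUnion_pair]
    exact BiConn.sUnion (x := x) (by rintro E (rfl | rfl); exacts [⟨hD.2.1, hxD⟩, ⟨hB, hxB⟩])
  exact hD.2.2 _ hDB Set.subset_union_left ▸ Set.subset_union_right

theorem BiConn.exists_isDistrict_superset {G : CADMG α} {B : Set α} (hB : G.BiConn B)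
    (hne : B.Nonempty) : ∃ D, G.IsDistrict D ∧ B ⊆ D := by
  obtain ⟨x, hx⟩ := hne
  set 𝒟 := {D | G.BiConn D ∧ B ⊆ D}
  have hB𝒟 : B ⊆ ⋃₀ 𝒟 := Set.subset_sUnion_of_mem ⟨hB, subset_rfl⟩
  have hconn : G.BiConn (⋃₀ 𝒟) := BiConn.sUnion fun D hD => ⟨hD.1, hD.2 hx⟩
  refine ⟨⋃₀ 𝒟, ⟨⟨x, hB𝒟 hx⟩, hconn, fun D' hD' hsub => ?_⟩, hB𝒟⟩
  exact (Set.subset_sUnion_of_mem (show D' ∈ 𝒟 from ⟨hD', hB𝒟.trans hsub⟩)).antisymm hsub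

theorem RandomAncestral.induce {G : CADMG α} {A : Set α} (hA : G.RandomAncestral A)
    (U : Set α) : (G.induce U).RandomAncestral (A ∩ U) := by
  refine ⟨fun a ⟨haA, haU⟩ => ⟨haU, hA.1 haA⟩, ?_⟩
  rintro x ⟨v, ⟨hvA, hvU⟩, hxv⟩
  rcases hxv.cases_head with rfl | ⟨y, hxy, -⟩
  · exact Or.inl ⟨hvA, hvU⟩
  have hxG : x ∈ A ∪ G.W :=
    hA.2 ⟨v, hvA, Relation.ReflTransGen.mono (fun a b hab => hab.1) _ _ hxv⟩
  refine ((G.induce U).dir_mem _ hxy).1.imp (fun hxU => ⟨?_, hxU.1⟩) id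
  exact hxG.resolve_right (Set.disjoint_left.mp G.disjointVW hxU.2)

theorem Reach.trans {G G' G'' : CADMG α} (h : Reach G G') (h' : Reach G' G'') :
    Reach G G'' := by
  induction h' with
  | refl => exact h
  | district _ hD ih => exact ih.district hD
  | margin _ hA ih => exact ih.margin hA

theorem Reach.exists_eq_induce {G G' : CADMG α} (h : Reach G G') :
    ∃ U, G' = G.induce U := by
  induction h with
  | refl => exact ⟨G.V, G.induce_self.symm⟩
  | district _ _ ih | margin _ _ ih =>
    obtain ⟨U, rfl⟩ := ih
    exact ⟨_, induce_induce _ _ _⟩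

theorem Reach.exists_reach_induce {X Y : CADMG α} (h : Reach X Y) {S : Set α} (U : Set α)
    (hS : X.BiConn S) (hne : S.Nonempty) (hSY : S ⊆ Y.V) (hSU : S ⊆ U) :
    ∃ U', S ⊆ U' ∧ U' ⊆ Y.V ∧ Reach (X.induce U) (X.induce U') := by
  induction h with
  | refl =>
    refine ⟨U ∩ X.V, fun a ha => ⟨hSU ha, hSY ha⟩, Set.inter_subset_right, ?_⟩
    rw [induce_inter_V]
    exact Reach.refl _
  | @district Y₁ D hY₁ hD ih =>
    obtain ⟨U₁, hSU₁, hU₁Y₁, hreach⟩ := ih (hSY.trans Set.inter_subset_right)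
    obtain ⟨V₁, rfl⟩ := hY₁.exists_eq_induce
    obtain ⟨D₁, hD₁, hSD₁⟩ :=
      ((biConn_induce_iff X hSU₁).2 hS).exists_isDistrict_superset hne
    have hD₁U₁ : D₁ ⊆ U₁ := fun a ha => (hD₁.2.1.1 ha).1
    have hD₁V₁ : D₁ ⊆ V₁ := fun a ha => (hU₁Y₁ (hD₁U₁ ha)).1
    have hD₁Y₁ : (X.induce V₁).BiConn D₁ :=
      (biConn_induce_iff X hD₁V₁).2 ((biConn_induce_iff X hD₁U₁).1 hD₁.2.1)
    have hD₁D : D₁ ⊆ D :=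
      hD₁Y₁.subset_of_isDistrict hD (hne.mono fun a ha => ⟨hSD₁ ha, (hSY ha).1⟩)
    refine ⟨D₁, hSD₁, fun a ha => ⟨hD₁D ha, hU₁Y₁ (hD₁U₁ ha)⟩, ?_⟩
    simpa only [induce_induce_of_subset _ hD₁U₁] using hreach.district hD₁
  | @margin Y₁ A hY₁ hA ih =>
    obtain ⟨U₁, hSU₁, hU₁Y₁, hreach⟩ := ih (hSY.trans Set.inter_subset_right)
    obtain ⟨V₁, rfl⟩ := hY₁.exists_eq_induce
    have hA₁ : (X.induce U₁).RandomAncestral (A ∩ U₁) := by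
      simpa only [induce_induce_of_subset _ fun a ha => (hU₁Y₁ ha).1] using hA.induce U₁
    refine ⟨A ∩ U₁, fun a ha => ⟨(hSY ha).1, hSU₁ ha⟩, fun a ha => ⟨ha.1, hU₁Y₁ ha.2⟩, ?_⟩
    simpa only [induce_induce_of_subset _ Set.inter_subset_right] using hreach.margin hA₁

theorem Reach.induce_of_intrinsic {G G' : CADMG α} (h : Reach G G') {S : Set α}
    (hS : G.Intrinsic S) (hSV : S ⊆ G'.V) : Reach G' (G'.induce S) := by
  obtain ⟨U, rfl⟩ := h.exists_eq_induce
  have hSU : S ⊆ U := fun a ha => (hSV ha).1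
  obtain ⟨U', hSU', hU'S, hreach⟩ :=
    hS.2.2.exists_reach_induce U hS.2.1 hS.1 (fun a ha => ⟨ha, hS.2.1.1 ha⟩) hSU
  obtain rfl : U' = S := Set.Subset.antisymm (fun a ha => (hU'S ha).1) hSU'
  rwa [induce_induce_of_subset _ hSU]

end CADMG

/-- **Lemma 5 (intrinsic sets are preserved by reachability).**  Let `G'` be a
CADMG reachable from `G`, with random vertex set `V'`.  Then the intrinsic sets
of `G'` are precisely the intrinsic sets of `G` contained in `V'`, and every
such intrinsic set has the same recursive head and the same tail in `G'` as
in `G`. -/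
theorem intrinsic_preserved_by_reach {α : Type} (G G' : CADMG α)
    (hreach : CADMG.Reach G G') :
    (∀ S : Set α, G'.Intrinsic S ↔ (G.Intrinsic S ∧ S ⊆ G'.V)) ∧
    (∀ S : Set α, G'.Intrinsic S →
      G'.sterile S = G.sterile S ∧ G'.paSet S = G.paSet S) := by
  obtain ⟨U, rfl⟩ := hreach.exists_eq_induce
  have subset_U : ∀ {S}, S ⊆ (G.induce U).V → S ⊆ U := fun h a ha => (h ha).1
  refine ⟨fun S => ⟨fun ⟨hne, hbc, hr⟩ => ?_, fun ⟨hS, hSV⟩ => ?_⟩, fun S hS => ?_⟩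
  · have hSU := subset_U hbc.1
    refine ⟨⟨hne, (G.biConn_induce_iff hSU).1 hbc, ?_⟩, hbc.1⟩
    simpa only [G.induce_induce_of_subset hSU] using hreach.trans hr
  · exact ⟨hS.1, (G.biConn_induce_iff (subset_U hSV)).2 hS.2.1,
      hreach.induce_of_intrinsic hS hSV⟩
  · have hpa := G.paSet_induce (subset_U hS.2.1.1)
    exact ⟨by rw [CADMG.sterile, CADMG.sterile, hpa], hpa⟩
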